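/- Define B(m,n,0) = m(n+1) and, for h ≥ 1, B(m,n,h) = (m+h)(n^3+n^2+n+1) + h(n+1) + B((m+h)n^2, n, h-1). Then for all h ≥ 0, B(m,n,h) ≤ (m+h)((n+1)(n^2+1)^h + g_1(n)·θ_h(n^2+1)), where g_1(n) = n^3+n^2+2n+2 and θ_h(t) = 1 + t + ... + t^{h-1} (with θ_0 = 0). -/

import Mathlib

/-!
Write `M = m + h` and `t = n² + 1`. One unfolding of the recursion replaces `m` by
`m' = M n²` and `h` by `h - 1`, so `M` becomes `m' + h - 1 ≤ M t`, while the terms it peels off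
are at most `M · g₁(n)` because `h ≤ M`. Hence a bound `B(m', n, h - 1) ≤ (m' + h - 1) · C` gives
`B(m, n, h) ≤ M (g₁(n) + t C)`, and iterating from `B(m, n, 0) = m (n + 1)` produces
`(n + 1) tʰ + g₁(n) θ_h(t)`.
-/

/-- The recursively defined bound `B(m,n,h)` from the paper. -/
def Bfun : ℕ → ℕ → ℕ → ℕ
  | m, n, 0 => m * (n + 1)
  | m, n, h + 1 =>
      (m + (h + 1)) * (n ^ 3 + n ^ 2 + n + 1) + (h + 1) * (n + 1) +
        Bfun ((m + (h + 1)) * n ^ 2) n h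

/-- `θ_h(t) = 1 + t + … + t^{h-1}`. -/
def theta (h t : ℕ) : ℕ := ∑ i ∈ Finset.range h, t ^ i

lemma theta_succ (h t : ℕ) : theta (h + 1) t = t * theta h t + 1 := geom_sum_succ

lemma Bfun_succ_le_of_le {m n h C : ℕ}
    (hB : Bfun ((m + (h + 1)) * n ^ 2) n h ≤ ((m + (h + 1)) * n ^ 2 + h) * C) :
    Bfun m n (h + 1) ≤
      (m + (h + 1)) * ((n ^ 3 + n ^ 2 + 2 * n + 2) + (n ^ 2 + 1) * C) := by
  have hpeeled : (h + 1) * (n + 1) ≤ (m + (h + 1)) * (n + 1) :=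
    Nat.mul_le_mul_right _ (Nat.le_add_left _ _)
  have hshift : (m + (h + 1)) * n ^ 2 + h ≤ (m + (h + 1)) * (n ^ 2 + 1) := by
    rw [Nat.mul_add_one]
    omega
  calc Bfun m n (h + 1)
      = (m + (h + 1)) * (n ^ 3 + n ^ 2 + n + 1) + (h + 1) * (n + 1) +
          Bfun ((m + (h + 1)) * n ^ 2) n h := rfl
    _ ≤ (m + (h + 1)) * (n ^ 3 + n ^ 2 + n + 1) + (m + (h + 1)) * (n + 1) +
          (m + (h + 1)) * (n ^ 2 + 1) * C := by
        gcongr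
        exact hB.trans (Nat.mul_le_mul_right _ hshift)
    _ = (m + (h + 1)) * ((n ^ 3 + n ^ 2 + 2 * n + 2) + (n ^ 2 + 1) * C) := by ring

/-- Upper bound: `B(m,n,h) ≤ (m+h)((n+1)(n²+1)^h + g₁(n)·θ_h(n²+1))` with
`g₁(n) = n³+n²+2n+2`. -/
theorem Bfun_upper_bound (m n h : ℕ) :
    Bfun m n h ≤
      (m + h) * ((n + 1) * (n ^ 2 + 1) ^ h + (n ^ 3 + n ^ 2 + 2 * n + 2) * theta h (n ^ 2 + 1)) := by
  induction h generalizing m with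
  | zero => simp [Bfun, theta]
  | succ h ih =>
    refine (Bfun_succ_le_of_le (ih _)).trans_eq ?_
    rw [theta_succ]
    ring
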